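/- Let α ∈ [0,1] and let μ⃗ = (μ₁,μ₂,μ₃) ∈ M_α. Then for every h ∈ C²(ℂ), E(μ⃗^t) = E(μ⃗) + t·Re D_h(μ⃗) + O(t²) as t → 0 through real values; that is, there exist constants C > 0 and δ > 0 such that |E(μ⃗^t) − E(μ⃗) − t·Re D_h(μ⃗)| ≤ C t² for all real t with |t| < δ. -/

import Mathlib

open MeasureTheory Complex Polynomial

noncomputable section

/-- The (topological) support of a measure on `ℂ`: the set of points all of whose open
neighborhoods have positive measure. -/
def msupport (μ : Measure ℂ) : Set ℂ :=
  {x : ℂ | ∀ U : Set ℂ, IsOpen U → x ∈ U → μ U ≠ 0}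

/-- The interaction matrix `A`. -/
def interA : Fin 3 → Fin 3 → ℝ :=
  ![![1, 1/2, 1/2], ![1/2, 1, -1/2], ![1/2, -1/2, 1]]

/-- The logarithmic energy `I(μ,ν) = ∬ log(1/|x-y|) dμ(x) dν(y)`. -/
def logEnergy (μ ν : Measure ℂ) : ℝ :=
  ∫ x, ∫ y, Real.log (1 / ‖x - y‖) ∂ν ∂μ

/-- The total energy functional `E(μ⃗)` with external fields `φ_j = Re Φ_j`. -/
def energyE (Φ : Fin 3 → Polynomial ℂ) (μ : Fin 3 → Measure ℂ) : ℝ :=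
  (∑ j, ∑ k, interA j k * logEnergy (μ j) (μ k)) +
    ∑ j, ∫ x, ((Φ j).eval x).re ∂(μ j)

/-- Membership in the class `M_α`: finite positive Borel measures with compact supports of zero
planar Lebesgue measure, finite energy (stated as integrability of all the energy integrands),
finite pairwise intersections of supports, and the prescribed total masses. -/
structure InClassM (α : ℝ) (Φ : Fin 3 → Polynomial ℂ) (μ : Fin 3 → Measure ℂ) : Prop where
  finite : ∀ j, IsFiniteMeasure (μ j)
  compactSupp : ∀ j, IsCompact (msupport (μ j))
  lebesgueNull : ∀ j, volume (msupport (μ j)) = 0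
  energyInt : ∀ j k, Integrable (fun p : ℂ × ℂ => Real.log (1 / ‖p.1 - p.2‖)) ((μ j).prod (μ k))
  fieldInt : ∀ j, Integrable (fun x => ((Φ j).eval x).re) (μ j)
  interFinite : Set.Finite ((msupport (μ 0) ∩ msupport (μ 1)) ∪
      (msupport (μ 0) ∩ msupport (μ 2)) ∪ (msupport (μ 1) ∩ msupport (μ 2)))
  mass01 : (μ 0 Set.univ).toReal + (μ 1 Set.univ).toReal = 1
  mass02 : (μ 0 Set.univ).toReal + (μ 2 Set.univ).toReal = α
  mass12 : (μ 1 Set.univ).toReal - (μ 2 Set.univ).toReal = 1 - α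

/-- The quantity `D_h(μ⃗)`. -/
def Dvar (Φ : Fin 3 → Polynomial ℂ) (μ : Fin 3 → Measure ℂ) (h : ℂ → ℂ) : ℂ :=
  -(∑ j, ∑ k, (interA j k : ℂ) * ∫ x, ∫ y, (h x - h y) / (x - y) ∂(μ k) ∂(μ j)) +
    ∑ j, ∫ x, (Polynomial.derivative (Φ j)).eval x * h x ∂(μ j)

/-- The pushforward `μ^t` of `μ` under the variation `z ↦ z + t h(z)`. -/
def pushMeas (h : ℂ → ℂ) (t : ℝ) (μ : Measure ℂ) : Measure ℂ :=
  Measure.map (fun z => z + (t : ℂ) * h z) μ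

/-- `μ⃗` is an `α`-critical measure: for every `h ∈ C²(ℂ)`,
`(E(μ⃗^t) - E(μ⃗))/t → 0` as `t → 0`. -/
def IsCriticalMeasure (Φ : Fin 3 → Polynomial ℂ) (μ : Fin 3 → Measure ℂ) : Prop :=
  ∀ h : ℂ → ℂ, ContDiff ℝ 2 h →
    Filter.Tendsto
      (fun t : ℝ => (energyE Φ (fun j => pushMeas h t (μ j)) - energyE Φ μ) / t)
      (nhdsWithin 0 {(0 : ℝ)}ᶜ) (nhds 0)

/-- The Cauchy transform `C^μ(z) = ∫ dμ(x)/(x - z)`. -/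
def cauchyT (μ : Measure ℂ) (z : ℂ) : ℂ := ∫ x, (x - z)⁻¹ ∂μ

/-- The functions `ξ₁, ξ₂, ξ₃` (0-indexed). -/
def xiF (Φ : Fin 3 → Polynomial ℂ) (μ : Fin 3 → Measure ℂ) : Fin 3 → ℂ → ℂ :=
  ![fun z => ((Polynomial.derivative (Φ 0)).eval z + (Polynomial.derivative (Φ 1)).eval z) / 3
      + cauchyT (μ 0) z + cauchyT (μ 1) z,
    fun z => -((Polynomial.derivative (Φ 0)).eval z + (Polynomial.derivative (Φ 2)).eval z) / 3
      - cauchyT (μ 0) z - cauchyT (μ 2) z,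
    fun z => -(Polynomial.derivative (Φ 1)).eval z / 3 + (Polynomial.derivative (Φ 2)).eval z / 3
      - cauchyT (μ 1) z + cauchyT (μ 2) z]

/-- The function `R(z)`. -/
def Rpol (Φ : Fin 3 → Polynomial ℂ) (μ : Fin 3 → Measure ℂ) (z : ℂ) : ℂ :=
  (1/9) * ∑ j, ∑ k, (interA j k : ℂ) * (Polynomial.derivative (Φ j)).eval z *
      (Polynomial.derivative (Φ k)).eval z
  - ∑ j, ∫ x, ((Polynomial.derivative (Φ j)).eval x - (Polynomial.derivative (Φ j)).eval z)
      / (x - z) ∂(μ j)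

/-!
Under `z ↦ z + t h(z)` the kernel `log (1/|x - y|)` changes by `-log |1 + t q(x, y)|`, where
`q(x, y) = (h x - h y)/(x - y)` is bounded on the compact supports because `h` is Lipschitz there.
Hence `log |1 + w| = Re w + O(|w|²)` gives the variation of each logarithmic energy with an error
`O(t²)` that is uniform in `(x, y)`, and second-order Taylor expansion of the polynomials `Φ_j`
does the same for the external fields. Integrating these uniform bounds against the finite
measures, and summing the finitely many terms of the energy, gives the expansion.
-/

open Asymptotics Filter Topology
open scoped NNReal

lemma msupport_eq_support (μ : Measure ℂ) : msupport μ = μ.support := by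
  ext x
  simp only [msupport, Measure.support_eq_forall_isOpen, Set.mem_ofPred_eq, pos_iff_ne_zero]
  exact forall_congr' fun U => Imp.swap

lemma ae_mem_msupport (μ : Measure ℂ) : ∀ᵐ x ∂μ, x ∈ msupport μ := by
  rw [msupport_eq_support]
  exact Measure.support_mem_ae

lemma exists_ae_norm_le_of_isCompact_msupport {ι : Type*} [Finite ι] (μ : ι → Measure ℂ)
    (hμ : ∀ j, IsCompact (msupport (μ j))) : ∃ R, ∀ j, ∀ᵐ x ∂μ j, ‖x‖ ≤ R := by
  obtain ⟨R, hR⟩ := (isCompact_iUnion hμ).isBounded.subset_closedBall 0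
  refine ⟨R, fun j => (ae_mem_msupport (μ j)).mono fun x hx => ?_⟩
  simpa using hR (Set.mem_iUnion_of_mem j hx)

lemma ae_prod_of_ae_of_ae {X Y : Type*} [MeasurableSpace X] [MeasurableSpace Y] {μ : Measure X}
    {ν : Measure Y} [SFinite ν] {p : X → Prop} {q : Y → Prop} (hp : ∀ᵐ x ∂μ, p x)
    (hq : ∀ᵐ y ∂ν, q y) : ∀ᵐ z ∂μ.prod ν, p z.1 ∧ q z.2 :=
  (Measure.quasiMeasurePreserving_fst.ae hp).and (Measure.quasiMeasurePreserving_snd.ae hq)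

lemma Continuous.integrable_of_ae_norm_le {X E : Type*} [NormedAddCommGroup X] [ProperSpace X]
    [MeasurableSpace X] [OpensMeasurableSpace X] [NormedAddCommGroup E] {f : X → E}
    (hf : Continuous f) {μ : Measure X} [IsFiniteMeasure μ] {R : ℝ} (hμR : ∀ᵐ x ∂μ, ‖x‖ ≤ R) :
    Integrable f μ := by
  have := hf.continuousOn.integrableOn_compact (isCompact_closedBall (0 : X) R) (μ := μ)
  rwa [IntegrableOn, Measure.restrict_eq_self_of_ae_mem (by simpa using hμR)] at this

section PerturbedIntegral

variable {X : Type*} [MeasurableSpace X] {ν : Measure X} [IsFiniteMeasure ν] {F G U : X → ℝ}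
  {c K : ℝ}

lemma integrable_of_abs_sub_sub_mul_le (hF : Integrable F ν) (hU : Integrable U ν)
    (hG : AEStronglyMeasurable G ν) (hb : ∀ᵐ x ∂ν, |G x - F x - c * U x| ≤ K) :
    Integrable G ν := by
  have hrem : Integrable (fun x => G x - F x - c * U x) ν :=
    .of_bound ((hG.sub hF.1).sub (hU.const_mul c).1) K (by simpa only [Real.norm_eq_abs] using hb)
  refine ((hrem.add hF).add (hU.const_mul c)).congr (.of_forall fun x => ?_)
  simp only [Pi.add_apply]
  ring

lemma abs_integral_sub_sub_mul_le (hF : Integrable F ν) (hU : Integrable U ν)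
    (hG : Integrable G ν) (hb : ∀ᵐ x ∂ν, |G x - F x - c * U x| ≤ K) :
    |∫ x, G x ∂ν - ∫ x, F x ∂ν - c * ∫ x, U x ∂ν| ≤ K * ν.real Set.univ := by
  rw [← integral_const_mul, ← integral_sub hG hF,
    ← integral_sub (f := fun x => G x - F x) (hG.sub hF) (hU.const_mul c), ← Real.norm_eq_abs]
  exact norm_integral_le_of_norm_le_const (by simpa only [Real.norm_eq_abs] using hb)

end PerturbedIntegral

lemma eventually_abs_mul_le (K : ℝ) {ε : ℝ} (hε : 0 < ε) : ∀ᶠ t : ℝ in 𝓝 0, |t| * K ≤ ε :=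
  (Continuous.tendsto' (by fun_prop) 0 0 (by simp)).eventually (ge_mem_nhds hε)

lemma exists_bound_of_isBigO_sq {f : ℝ → ℝ} (hf : f =O[𝓝 0] fun t => t ^ 2) :
    ∃ C : ℝ, 0 < C ∧ ∃ δ : ℝ, 0 < δ ∧ ∀ t : ℝ, |t| < δ → |f t| ≤ C * t ^ 2 := by
  obtain ⟨C, hC, hCf⟩ := hf.exists_pos
  obtain ⟨δ, hδ, hδf⟩ := Metric.eventually_nhds_iff.mp hCf.bound
  exact ⟨C, hC, δ, hδ, fun t ht => by simpa using hδf (by simpa using ht)⟩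

lemma abs_log_norm_one_add_sub_re_le {w : ℂ} (hw : ‖w‖ ≤ 1 / 2) :
    |Real.log ‖1 + w‖ - w.re| ≤ ‖w‖ ^ 2 := by
  have hw1 : ‖w‖ < 1 := hw.trans_lt (by norm_num)
  have hinv : (1 - ‖w‖)⁻¹ ≤ 2 := by
    rw [inv_le_comm₀ (by linarith) two_pos]
    linarith
  calc |Real.log ‖1 + w‖ - w.re| = |(Complex.log (1 + w) - w).re| := by
        rw [Complex.sub_re, Complex.log_re]
    _ ≤ ‖Complex.log (1 + w) - w‖ := Complex.abs_re_le_norm _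
    _ ≤ ‖w‖ ^ 2 * (1 - ‖w‖)⁻¹ / 2 := Complex.norm_log_one_add_sub_self_le hw1
    _ ≤ ‖w‖ ^ 2 := by nlinarith [sq_nonneg ‖w‖]

lemma abs_log_inv_norm_perturbed_sub_le (h : ℂ → ℂ) {t K : ℝ} {x y : ℂ}
    (hq : ‖(h x - h y) / (x - y)‖ ≤ K) (ht : |t| * K ≤ 1 / 2) :
    |Real.log (1 / ‖(x + t * h x) - (y + t * h y)‖) - Real.log (1 / ‖x - y‖)
      + t * ((h x - h y) / (x - y)).re| ≤ K ^ 2 * t ^ 2 := by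
  -- on the diagonal every term vanishes, thanks to `1 / 0 = 0` and `Real.log 0 = 0`
  rcases eq_or_ne x y with rfl | hxy
  · simpa using mul_nonneg (sq_nonneg K) (sq_nonneg t)
  have hfactor : (x + t * h x) - (y + t * h y) = (x - y) * (1 + t * ((h x - h y) / (x - y))) := by
    field_simp [sub_ne_zero.mpr hxy]
    ring
  set w : ℂ := t * ((h x - h y) / (x - y))
  have hw : ‖w‖ ≤ |t| * K := by
    rw [norm_mul, Complex.norm_real, Real.norm_eq_abs]
    gcongr
  have h1w : ‖1 + w‖ ≠ 0 := by
    have := norm_sub_norm_le (1 : ℂ) (-w)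
    rw [norm_one, norm_neg, sub_neg_eq_add] at this
    exact (lt_of_lt_of_le (by linarith) this).ne'
  have hlog : Real.log (1 / ‖(x + t * h x) - (y + t * h y)‖) - Real.log (1 / ‖x - y‖)
      = -Real.log ‖1 + w‖ := by
    rw [hfactor, norm_mul, one_div, one_div, Real.log_inv, Real.log_inv,
      Real.log_mul (norm_ne_zero_iff.mpr (sub_ne_zero.mpr hxy)) h1w]
    ring
  calc _ = |Real.log ‖1 + w‖ - w.re| := by
        rw [hlog, ← abs_neg, Complex.re_ofReal_mul]
        ring_nf
    _ ≤ ‖w‖ ^ 2 := abs_log_norm_one_add_sub_re_le (hw.trans ht)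
    _ ≤ (|t| * K) ^ 2 := by gcongr
    _ = K ^ 2 * t ^ 2 := by rw [mul_pow, sq_abs]; ring

lemma LipschitzOnWith.norm_sub_div_sub_le {𝕜 : Type*} [NormedField 𝕜] {f : 𝕜 → 𝕜} {s : Set 𝕜}
    {K : ℝ≥0} (hf : LipschitzOnWith K f s) {x y : 𝕜} (hx : x ∈ s) (hy : y ∈ s) :
    ‖(f x - f y) / (x - y)‖ ≤ K := by
  rw [norm_div]
  exact div_le_of_le_mul₀ (norm_nonneg _) K.2 (hf.norm_sub_le hx hy)

lemma Convex.norm_sub_sub_smul_le_of_lipschitzOnWith {𝕜 E : Type*} [RCLike 𝕜]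
    [NormedAddCommGroup E] [NormedSpace 𝕜 E] {f f' : 𝕜 → E} {s : Set 𝕜} {K : ℝ≥0}
    (hs : Convex ℝ s) (hf : ∀ x ∈ s, HasDerivWithinAt f (f' x) s x)
    (hf' : LipschitzOnWith K f' s) {a b : 𝕜} (ha : a ∈ s) (hb : b ∈ s) :
    ‖f b - f a - (b - a) • f' a‖ ≤ K * ‖b - a‖ ^ 2 := by
  have hseg : segment ℝ a b ⊆ s := hs.segment_subset ha hb
  have hderiv : ∀ x ∈ segment ℝ a b,
      HasDerivWithinAt (fun y => f y - (y - a) • f' a) (f' x - f' a) (segment ℝ a b) x := by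
    intro x hx
    have hlin : HasDerivAt (fun y : 𝕜 => (y - a) • f' a) (f' a) x := by
      simpa using ((hasDerivAt_id x).sub_const a).smul_const (f' a)
    exact ((hf x (hseg hx)).mono hseg).sub hlin.hasDerivWithinAt
  have hbound : ∀ x ∈ segment ℝ a b, ‖f' x - f' a‖ ≤ K * ‖b - a‖ := by
    intro x hx
    calc ‖f' x - f' a‖ ≤ K * ‖x - a‖ := hf'.norm_sub_le (hseg hx) ha
      _ ≤ K * ‖b - a‖ := by
        gcongr
        have := dist_add_dist_of_mem_segment hx
        rw [← dist_eq_norm, ← dist_eq_norm, dist_comm x a, dist_comm b a]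
        linarith [dist_nonneg (x := x) (y := b)]
  have := (convex_segment a b).norm_image_sub_le_of_norm_hasDerivWithin_le hderiv hbound
    (left_mem_segment ℝ a b) (right_mem_segment ℝ a b)
  simpa [sq, mul_assoc, sub_right_comm] using this

lemma Polynomial.locallyLipschitz_eval (P : ℂ[X]) : LocallyLipschitz fun x => P.eval x := by
  simpa using (P.contDiff_aeval (𝕜 := ℂ) 1).locallyLipschitz

lemma Polynomial.exists_norm_eval_sub_sub_le (P : ℂ[X]) {s : Set ℂ} (hs : Convex ℝ s)
    (hs' : IsCompact s) : ∃ K : ℝ≥0, ∀ a ∈ s, ∀ b ∈ s,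
      ‖P.eval b - P.eval a - (b - a) * P.derivative.eval a‖ ≤ K * ‖b - a‖ ^ 2 := by
  obtain ⟨K, hK⟩ :=
    P.derivative.locallyLipschitz_eval.locallyLipschitzOn.exists_lipschitzOnWith_of_compact hs'
  exact ⟨K, fun a ha b hb => hs.norm_sub_sub_smul_le_of_lipschitzOnWith
    (fun x _ => (P.hasDerivAt x).hasDerivWithinAt) hK ha hb⟩

lemma logEnergy_map {T : ℂ → ℂ} (hT : Measurable T) (μ ν : Measure ℂ) [SFinite ν] :
    logEnergy (μ.map T) (ν.map T) = ∫ x, ∫ y, Real.log (1 / ‖T x - T y‖) ∂ν ∂μ := by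
  have hker : Measurable fun p : ℂ × ℂ => Real.log (1 / ‖p.1 - p.2‖) := by fun_prop
  rw [logEnergy, integral_map hT.aemeasurable
    hker.stronglyMeasurable.integral_prod_right'.aestronglyMeasurable]
  congr 1 with x
  exact integral_map hT.aemeasurable
    (hker.comp (measurable_const.prodMk measurable_id)).aestronglyMeasurable

theorem logEnergy_pushMeas_sub_isBigO {μ ν : Measure ℂ} [IsFiniteMeasure μ] [IsFiniteMeasure ν]
    {R : ℝ} (hμR : ∀ᵐ x ∂μ, ‖x‖ ≤ R) (hνR : ∀ᵐ y ∂ν, ‖y‖ ≤ R)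
    (hlog : Integrable (fun p : ℂ × ℂ => Real.log (1 / ‖p.1 - p.2‖)) (μ.prod ν))
    {h : ℂ → ℂ} (hh : ContDiff ℝ 1 h) :
    (fun t : ℝ => logEnergy (pushMeas h t μ) (pushMeas h t ν) - logEnergy μ ν
      + t * (∫ x, ∫ y, (h x - h y) / (x - y) ∂ν ∂μ).re) =O[𝓝 0] fun t => t ^ 2 := by
  have hh_meas : Measurable h := hh.continuous.measurable
  obtain ⟨K, hK⟩ := hh.locallyLipschitz.locallyLipschitzOn.exists_lipschitzOnWith_of_compact
    (isCompact_closedBall (0 : ℂ) R)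
  set q : ℂ × ℂ → ℂ := fun p => (h p.1 - h p.2) / (p.1 - p.2)
  have hq_bound : ∀ᵐ p ∂μ.prod ν, ‖q p‖ ≤ K := by
    filter_upwards [ae_prod_of_ae_of_ae hμR hνR] with p hp
    exact hK.norm_sub_div_sub_le (by simpa using hp.1) (by simpa using hp.2)
  have hq_int : Integrable q (μ.prod ν) :=
    .of_bound (by fun_prop : Measurable q).aestronglyMeasurable K hq_bound
  have hre_int : Integrable (fun p => (q p).re) (μ.prod ν) := hq_int.re
  refine IsBigO.of_bound (K ^ 2 * (μ.prod ν).real Set.univ) ?_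
  filter_upwards [eventually_abs_mul_le K one_half_pos] with t ht
  set T : ℂ → ℂ := fun z => z + (t : ℂ) * h z
  have hpoint : ∀ᵐ p ∂μ.prod ν, |Real.log (1 / ‖T p.1 - T p.2‖) - Real.log (1 / ‖p.1 - p.2‖)
      - (-t) * (q p).re| ≤ K ^ 2 * t ^ 2 := by
    filter_upwards [hq_bound] with p hp
    simpa only [neg_mul, sub_neg_eq_add] using abs_log_inv_norm_perturbed_sub_le h hp ht
  have hT : Measurable T := by fun_prop
  have hG := integrable_of_abs_sub_sub_mul_le hlog hre_int
    (by fun_prop : Measurable fun p : ℂ × ℂ => Real.log (1 / ‖T p.1 - T p.2‖)).aestronglyMeasurable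
    hpoint
  have hpush : logEnergy (pushMeas h t μ) (pushMeas h t ν)
      = ∫ p, Real.log (1 / ‖T p.1 - T p.2‖) ∂μ.prod ν := by
    rw [pushMeas, pushMeas, logEnergy_map hT, integral_prod _ hG]
  have hq_re : (∫ x, ∫ y, (h x - h y) / (x - y) ∂ν ∂μ).re = ∫ p, (q p).re ∂μ.prod ν := by
    rw [← integral_prod _ hq_int]
    exact (Complex.reCLM.integral_comp_comm hq_int).symm
  rw [Real.norm_eq_abs, norm_pow, Real.norm_eq_abs, sq_abs, hpush, logEnergy,
    ← integral_prod _ hlog, hq_re, mul_right_comm]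
  simpa only [neg_mul, sub_neg_eq_add] using abs_integral_sub_sub_mul_le hlog hre_int hG hpoint

theorem integral_pushMeas_sub_isBigO (P : ℂ[X]) {μ : Measure ℂ} [IsFiniteMeasure μ] {R : ℝ}
    (hμR : ∀ᵐ x ∂μ, ‖x‖ ≤ R) {h : ℂ → ℂ} (hh : Continuous h) :
    (fun t : ℝ => ∫ x, (P.eval x).re ∂(pushMeas h t μ) - ∫ x, (P.eval x).re ∂μ
      - t * (∫ x, P.derivative.eval x * h x ∂μ).re) =O[𝓝 0] fun t => t ^ 2 := by
  obtain ⟨M, hM⟩ := (isCompact_closedBall (0 : ℂ) R).exists_bound_of_continuousOn hh.continuousOn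
  obtain ⟨K, hK⟩ := P.exists_norm_eval_sub_sub_le (convex_closedBall 0 (R + 1))
    (isCompact_closedBall 0 (R + 1))
  have hint {E : Type} [NormedAddCommGroup E] {f : ℂ → E} (hf : Continuous f) : Integrable f μ :=
    hf.integrable_of_ae_norm_le hμR
  refine IsBigO.of_bound (K * M ^ 2 * μ.real Set.univ) ?_
  filter_upwards [eventually_abs_mul_le M one_pos] with t ht
  have hpoint : ∀ᵐ x ∂μ, |(P.eval (x + t * h x)).re - (P.eval x).re
      - t * (P.derivative.eval x * h x).re| ≤ K * M ^ 2 * t ^ 2 := by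
    filter_upwards [hμR] with x hx
    have hw : ‖(t : ℂ) * h x‖ ≤ |t| * M := by
      rw [norm_mul, Complex.norm_real, Real.norm_eq_abs]
      gcongr
      exact hM x (by simpa using hx)
    have hxw : x + t * h x ∈ Metric.closedBall (0 : ℂ) (R + 1) := by
      simpa using (norm_add_le _ _).trans (add_le_add hx (hw.trans ht))
    calc _ = |(P.eval (x + t * h x) - P.eval x - (x + t * h x - x) * P.derivative.eval x).re| := by
          rw [add_sub_cancel_left, Complex.sub_re, Complex.sub_re, mul_assoc, mul_comm (h x),
            Complex.re_ofReal_mul]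
      _ ≤ K * ‖x + t * h x - x‖ ^ 2 := (Complex.abs_re_le_norm _).trans
          (hK x (by simpa using hx.trans (le_add_of_nonneg_right zero_le_one)) _ hxw)
      _ ≤ K * (|t| * M) ^ 2 := by rw [add_sub_cancel_left]; gcongr
      _ = K * M ^ 2 * t ^ 2 := by rw [mul_pow, sq_abs]; ring
  have hpush : ∫ x, (P.eval x).re ∂(pushMeas h t μ) = ∫ x, (P.eval (x + t * h x)).re ∂μ :=
    integral_map (by fun_prop) (by fun_prop)
  rw [Real.norm_eq_abs, norm_pow, Real.norm_eq_abs, sq_abs, hpush, mul_right_comm,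
    ← Complex.reCLM_apply,
    ← Complex.reCLM.integral_comp_comm (hint (by fun_prop))]
  exact abs_integral_sub_sub_mul_le (hint (by fun_prop)) (hint (by fun_prop)) (hint (by fun_prop))
    hpoint

lemma energyE_sub_sub_mul_re_Dvar (Φ : Fin 3 → ℂ[X]) (μ ν : Fin 3 → Measure ℂ) (h : ℂ → ℂ)
    (t : ℝ) :
    energyE Φ ν - energyE Φ μ - t * (Dvar Φ μ h).re
      = ∑ j, ∑ k, interA j k * (logEnergy (ν j) (ν k) - logEnergy (μ j) (μ k)
          + t * (∫ x, ∫ y, (h x - h y) / (x - y) ∂(μ k) ∂(μ j)).re)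
        + ∑ j, (∫ x, ((Φ j).eval x).re ∂(ν j) - ∫ x, ((Φ j).eval x).re ∂(μ j)
          - t * (∫ x, (Φ j).derivative.eval x * h x ∂(μ j)).re) := by
  simp only [energyE, Dvar, Complex.add_re, Complex.neg_re, Complex.re_ofReal_mul,
    Fin.sum_univ_three]
  ring

theorem energy_expansion_general (α : ℝ)
    (Φ : Fin 3 → Polynomial ℂ)
    (μ : Fin 3 → Measure ℂ) (hμ : InClassM α Φ μ)
    (h : ℂ → ℂ) (hh : ContDiff ℝ 2 h) :
    ∃ C : ℝ, 0 < C ∧ ∃ δ : ℝ, 0 < δ ∧ ∀ t : ℝ, |t| < δ →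
      |energyE Φ (fun j => pushMeas h t (μ j)) - energyE Φ μ - t * (Dvar Φ μ h).re|
        ≤ C * t ^ 2 := by
  have := hμ.finite
  obtain ⟨R, hR⟩ := exists_ae_norm_le_of_isCompact_msupport μ hμ.compactSupp
  apply exists_bound_of_isBigO_sq
  simp only [energyE_sub_sub_mul_re_Dvar]
  refine (IsBigO.fun_sum fun j _ => IsBigO.fun_sum fun k _ => ?_).add
    (IsBigO.fun_sum fun j _ => integral_pushMeas_sub_isBigO _ (hR j) hh.continuous)
  exact (logEnergy_pushMeas_sub_isBigO (hR j) (hR k) (hμ.energyInt j k)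
    (hh.of_le one_le_two)).const_mul_left _

/-- For `α ∈ [0,1]` and `μ⃗ ∈ M_α`, for every `h ∈ C²(ℂ)` one has
`E(μ⃗^t) = E(μ⃗) + t·Re D_h(μ⃗) + O(t²)` as `t → 0` through real values. -/
theorem energy_expansion (α : ℝ) (hα : α ∈ Set.Icc (0 : ℝ) 1)
    (Φ : Fin 3 → Polynomial ℂ)
    (hΦ : Polynomial.derivative (Φ 0) - Polynomial.derivative (Φ 1) =
      Polynomial.derivative (Φ 2))
    (μ : Fin 3 → Measure ℂ) (hμ : InClassM α Φ μ)
    (h : ℂ → ℂ) (hh : ContDiff ℝ 2 h) :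
    ∃ C : ℝ, 0 < C ∧ ∃ δ : ℝ, 0 < δ ∧ ∀ t : ℝ, |t| < δ →
      |energyE Φ (fun j => pushMeas h t (μ j)) - energyE Φ μ - t * (Dvar Φ μ h).re|
        ≤ C * t ^ 2 :=
  energy_expansion_general α Φ μ hμ h hh
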